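/- arXiv:math/0608704 — 3 statements merged into one kernel-verified Lean document; each statement's English description precedes it below -/
import Mathlib

section
/- Let I be a real 6×6 matrix with I² = −1, written in 3×3 blocks I = [[A, B], [−Bᵀ, C]] where A and C are skew-symmetric, with a₁=A₁₂, a₂=A₁₃, a₃=A₂₃ and c₁=C₁₂, c₂=C₁₃, c₃=C₂₃. Then a₁² + a₂² + a₃² = c₁² + c₂² + c₃² (equivalently, tr(A²) = tr(C²)). -/
open Matrix

lemma skew_trace_sq (M : Matrix (Fin 3) (Fin 3) ℝ) (h : Mᵀ = -M) :
    Matrix.trace (M * M) = -2 * (M 0 1 ^ 2 + M 0 2 ^ 2 + M 1 2 ^ 2) := by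
  have e : ∀ i j, M j i = -M i j := fun i j => by
    have := congrFun (congrFun h i) j; simpa [Matrix.transpose_apply] using this
  have e00 := e 0 0; have e11 := e 1 1; have e22 := e 2 2
  have e01 := e 0 1; have e02 := e 0 2; have e12 := e 1 2
  simp only [Matrix.trace, Matrix.diag, Matrix.mul_apply, Fin.sum_univ_three]
  rw [e01, e02, e12]
  nlinarith [e00, e11, e22]

/-- if a real 6×6 matrix `I = [[A, B], [−Bᵀ, C]]` (3×3 blocks, `A`, `C`
skew-symmetric, `a₁=A₁₂, a₂=A₁₃, a₃=A₂₃`, `c₁=C₁₂, c₂=C₁₃, c₃=C₂₃`) satisfies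
`I² = −1`, then `a₁² + a₂² + a₃² = c₁² + c₂² + c₃²`, equivalently `tr(A²) = tr(C²)`. -/
theorem stmt4 (A B C : Matrix (Fin 3) (Fin 3) ℝ)
    (hA : Aᵀ = -A) (hC : Cᵀ = -C)
    (hsq : Matrix.fromBlocks A B (-Bᵀ) C * Matrix.fromBlocks A B (-Bᵀ) C = -1) :
    A 0 1 ^ 2 + A 0 2 ^ 2 + A 1 2 ^ 2 = C 0 1 ^ 2 + C 0 2 ^ 2 + C 1 2 ^ 2 ∧
    Matrix.trace (A * A) = Matrix.trace (C * C) := by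
  rw [Matrix.fromBlocks_multiply] at hsq
  have hneg : (-1 : Matrix (Fin 3 ⊕ Fin 3) (Fin 3 ⊕ Fin 3) ℝ) =
      Matrix.fromBlocks (-1) 0 0 (-1) := by
    have : (1 : Matrix (Fin 3 ⊕ Fin 3) (Fin 3 ⊕ Fin 3) ℝ) = Matrix.fromBlocks 1 0 0 1 :=
      (Matrix.fromBlocks_one).symm
    rw [← neg_neg (Matrix.fromBlocks (-1) 0 0 (-1) : Matrix _ _ ℝ)]
    congr 1
    rw [this]
    simp [Matrix.fromBlocks_neg]
  rw [hneg] at hsq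
  have h11 : A * A + B * (-Bᵀ) = -1 := by
    have := congrArg Matrix.toBlocks₁₁ hsq
    simpa [Matrix.toBlocks_fromBlocks₁₁] using this
  have h22 : (-Bᵀ) * B + C * C = -1 := by
    have := congrArg Matrix.toBlocks₂₂ hsq
    simpa [Matrix.toBlocks_fromBlocks₂₂] using this
  have hAA : A * A = -1 + B * Bᵀ := by
    rw [mul_neg, ← sub_eq_add_neg, sub_eq_iff_eq_add] at h11
    exact h11
  have hCC : C * C = -1 + Bᵀ * B := by
    rw [neg_mul, neg_add_eq_iff_eq_add] at h22
    rw [h22]; abel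
  have htr : Matrix.trace (A * A) = Matrix.trace (C * C) := by
    rw [hAA, hCC, Matrix.trace_add, Matrix.trace_add, Matrix.trace_mul_comm]
  refine ⟨?_, htr⟩
  have h1 := skew_trace_sq A hA
  have h2 := skew_trace_sq C hC
  rw [h1, h2] at htr
  linarith
end

section
/- Let I be a real 6×6 matrix with Iᵀ = −I and I² = −1, written in 3×3 blocks I = [[A, B], [−Bᵀ, C]] with A, C skew-symmetric. If det B = 0, then the Nijenhuis tensor of I on 𝔰𝔲(2)×𝔰𝔲(2) vanishes identically: N(X,Y) = 0 for all X, Y (i.e. the almost complex structure I is integrable). -/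
open Matrix

/-- The Lie bracket of `𝔰𝔲(2) × 𝔰𝔲(2)` on `ℝ⁶`: componentwise cross product, so that
`[e₁,e₂]=e₃, [e₁,e₃]=-e₂, [e₂,e₃]=e₁, [e₄,e₅]=e₆, [e₄,e₆]=-e₅, [e₅,e₆]=e₄` and mixed
brackets vanish. -/
def bkt (X Y : Fin 6 → ℝ) : Fin 6 → ℝ :=
  ![X 1 * Y 2 - X 2 * Y 1,
    X 2 * Y 0 - X 0 * Y 2,
    X 0 * Y 1 - X 1 * Y 0,
    X 4 * Y 5 - X 5 * Y 4,
    X 5 * Y 3 - X 3 * Y 5,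
    X 3 * Y 4 - X 4 * Y 3]

/-- Standard basis of `ℝ⁶`. -/
def e (i : Fin 6) : Fin 6 → ℝ := Pi.single i 1

/-- The Nijenhuis tensor `N(X,Y) = [IX,IY] − [X,Y] − I[X,IY] − I[IX,Y]`. -/
def nij (I : Matrix (Fin 6) (Fin 6) ℝ) (X Y : Fin 6 → ℝ) : Fin 6 → ℝ :=
  bkt (I.mulVec X) (I.mulVec Y) - bkt X Y - I.mulVec (bkt X (I.mulVec Y))
    - I.mulVec (bkt (I.mulVec X) Y)

/-- The squared norm `‖N‖² = Σ_{i,j,k} ⟨N(eᵢ,eⱼ), e_k⟩²` of the Nijenhuis tensor. -/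
noncomputable def nijNormSq (I : Matrix (Fin 6) (Fin 6) ℝ) : ℝ :=
  ∑ i : Fin 6, ∑ j : Fin 6, ∑ k : Fin 6, (nij I (e i) (e j)) k ^ 2

set_option maxHeartbeats 2000000 in
private lemma cons_val_five' {α : Type*} {m : ℕ} (x : α)
    (u : Fin m.succ.succ.succ.succ.succ → α) :
    vecCons x u 5 = vecHead (vecTail (vecTail (vecTail (vecTail u)))) :=
  rfl

set_option maxHeartbeats 1000000 in
set_option maxRecDepth 10000 in
private lemma nijKey (a1 a2 a3 c1 c2 c3 t : ℝ) (hα : a1^2 + a2^2 + a3^2 = 1) (hγ : c1^2 + c2^2 + c3^2 = 1) :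
    ∀ X Y : Fin 6 → ℝ, nij !![0, -a3, a2, t*a1*c1, t*a1*c2, t*a1*c3;
       a3, 0, -a1, t*a2*c1, t*a2*c2, t*a2*c3;
       -a2, a1, 0, t*a3*c1, t*a3*c2, t*a3*c3;
       -(t*a1*c1), -(t*a2*c1), -(t*a3*c1), 0, -c3, c2;
       -(t*a1*c2), -(t*a2*c2), -(t*a3*c2), c3, 0, -c1;
       -(t*a1*c3), -(t*a2*c3), -(t*a3*c3), -c2, c1, 0] X Y = 0 := by
  intro X Y
  have hX : !![0, -a3, a2, t*a1*c1, t*a1*c2, t*a1*c3;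
       a3, 0, -a1, t*a2*c1, t*a2*c2, t*a2*c3;
       -a2, a1, 0, t*a3*c1, t*a3*c2, t*a3*c3;
       -(t*a1*c1), -(t*a2*c1), -(t*a3*c1), 0, -c3, c2;
       -(t*a1*c2), -(t*a2*c2), -(t*a3*c2), c3, 0, -c1;
       -(t*a1*c3), -(t*a2*c3), -(t*a3*c3), -c2, c1, 0].mulVec X = ![(0) * X 0 + (-a3) * X 1 + (a2) * X 2 + (t*a1*c1) * X 3 + (t*a1*c2) * X 4 + (t*a1*c3) * X 5, (a3) * X 0 + (0) * X 1 + (-a1) * X 2 + (t*a2*c1) * X 3 + (t*a2*c2) * X 4 + (t*a2*c3) * X 5, (-a2) * X 0 + (a1) * X 1 + (0) * X 2 + (t*a3*c1) * X 3 + (t*a3*c2) * X 4 + (t*a3*c3) * X 5, (-(t*a1*c1)) * X 0 + (-(t*a2*c1)) * X 1 + (-(t*a3*c1)) * X 2 + (0) * X 3 + (-c3) * X 4 + (c2) * X 5, (-(t*a1*c2)) * X 0 + (-(t*a2*c2)) * X 1 + (-(t*a3*c2)) * X 2 + (c3) * X 3 + (0) * X 4 + (-c1) * X 5, (-(t*a1*c3))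 * X 0 + (-(t*a2*c3)) * X 1 + (-(t*a3*c3)) * X 2 + (-c2) * X 3 + (c1) * X 4 + (0) * X 5] := by
    funext i
    fin_cases i <;>
      simp [Matrix.mulVec, dotProduct, Fin.sum_univ_six, cons_val_five'] <;> ring
  have hY : !![0, -a3, a2, t*a1*c1, t*a1*c2, t*a1*c3;
       a3, 0, -a1, t*a2*c1, t*a2*c2, t*a2*c3;
       -a2, a1, 0, t*a3*c1, t*a3*c2, t*a3*c3;
       -(t*a1*c1), -(t*a2*c1), -(t*a3*c1), 0, -c3, c2;
       -(t*a1*c2), -(t*a2*c2), -(t*a3*c2), c3, 0, -c1;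
       -(t*a1*c3), -(t*a2*c3), -(t*a3*c3), -c2, c1, 0].mulVec Y = ![(0) * Y 0 + (-a3) * Y 1 + (a2) * Y 2 + (t*a1*c1) * Y 3 + (t*a1*c2) * Y 4 + (t*a1*c3) * Y 5, (a3) * Y 0 + (0) * Y 1 + (-a1) * Y 2 + (t*a2*c1) * Y 3 + (t*a2*c2) * Y 4 + (t*a2*c3) * Y 5, (-a2) * Y 0 + (a1) * Y 1 + (0) * Y 2 + (t*a3*c1) * Y 3 + (t*a3*c2) * Y 4 + (t*a3*c3) * Y 5, (-(t*a1*c1)) * Y 0 + (-(t*a2*c1)) * Y 1 + (-(t*a3*c1)) * Y 2 + (0) * Y 3 + (-c3) * Y 4 + (c2) * Y 5, (-(t*a1*c2)) * Y 0 + (-(t*a2*c2)) * Y 1 + (-(t*a3*c2)) * Y 2 + (c3) * Y 3 + (0) * Y 4 + (-c1) * Y 5, (-(t*a1*c3)) * Y 0 + (-(t*a2*c3)) * Y 1 + (-(t*a3*c3)) * Y 2 + (-c2) * Y 3 + (c1) * Y 4 + (0) * Y 5] := by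
    funext i
    fin_cases i <;>
      simp [Matrix.mulVec, dotProduct, Fin.sum_univ_six, cons_val_five'] <;> ring
  funext k
  simp only [nij, hX, hY, Pi.sub_apply, Pi.zero_apply]
  fin_cases k <;>
    simp [bkt, Matrix.mulVec, dotProduct, Fin.sum_univ_six, cons_val_five'] <;>
    first
    | linear_combination (X 1 * Y 2 - X 2 * Y 1) * hα
    | linear_combination (X 2 * Y 0 - X 0 * Y 2) * hα
    | linear_combination (X 0 * Y 1 - X 1 * Y 0) * hα
    | linear_combination (X 4 * Y 5 - X 5 * Y 4) * hγ
    | linear_combination (X 5 * Y 3 - X 3 * Y 5) * hγ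
    | linear_combination (X 3 * Y 4 - X 4 * Y 3) * hγ


set_option maxHeartbeats 4000000 in
/-- if an orthogonal almost complex structure `I = [[A,B],[−Bᵀ,C]]` on
`𝔰𝔲(2)×𝔰𝔲(2)` (with `A`, `C` skew-symmetric) has `det B = 0`, then its Nijenhuis
tensor vanishes identically, i.e. `I` is integrable. -/
theorem stmt8 (A B C : Matrix (Fin 3) (Fin 3) ℝ)
    (hA : Aᵀ = -A) (hC : Cᵀ = -C)
    (I : Matrix (Fin 6) (Fin 6) ℝ)
    (hI : I = Matrix.reindex finSumFinEquiv finSumFinEquiv (Matrix.fromBlocks A B (-Bᵀ) C))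
    (hskew : Iᵀ = -I) (hsq : I * I = -1)
    (hdet : B.det = 0) :
    ∀ X Y : Fin 6 → ℝ, nij I X Y = 0 := by
  subst hI
  have hIe : (Matrix.reindex finSumFinEquiv finSumFinEquiv (Matrix.fromBlocks A B (-Bᵀ) C)) =
      !![A 0 0, A 0 1, A 0 2, B 0 0, B 0 1, B 0 2;
         A 1 0, A 1 1, A 1 2, B 1 0, B 1 1, B 1 2;
         A 2 0, A 2 1, A 2 2, B 2 0, B 2 1, B 2 2;
         -B 0 0, -B 1 0, -B 2 0, C 0 0, C 0 1, C 0 2;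
         -B 0 1, -B 1 1, -B 2 1, C 1 0, C 1 1, C 1 2;
         -B 0 2, -B 1 2, -B 2 2, C 2 0, C 2 1, C 2 2] := by
    ext i j
    fin_cases i <;> fin_cases j <;> rfl
  rw [hIe] at hsq ⊢
  have za1 : A 0 0 = 0 := by
    have h := congr_fun (congr_fun hA 0) 0
    simp only [Matrix.transpose_apply, Matrix.neg_apply] at h
    linarith
  have za2 : A 1 1 = 0 := by
    have h := congr_fun (congr_fun hA 1) 1
    simp only [Matrix.transpose_apply, Matrix.neg_apply] at h
    linarith
  have za3 : A 2 2 = 0 := by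
    have h := congr_fun (congr_fun hA 2) 2
    simp only [Matrix.transpose_apply, Matrix.neg_apply] at h
    linarith
  have za4 : A 0 1 = -A 1 0 := by
    have h := congr_fun (congr_fun hA 1) 0
    simp only [Matrix.transpose_apply, Matrix.neg_apply] at h
    linarith
  have za5 : A 2 0 = -A 0 2 := by
    have h := congr_fun (congr_fun hA 0) 2
    simp only [Matrix.transpose_apply, Matrix.neg_apply] at h
    linarith
  have za6 : A 1 2 = -A 2 1 := by
    have h := congr_fun (congr_fun hA 2) 1
    simp only [Matrix.transpose_apply, Matrix.neg_apply] at h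
    linarith
  have zc1 : C 0 0 = 0 := by
    have h := congr_fun (congr_fun hC 0) 0
    simp only [Matrix.transpose_apply, Matrix.neg_apply] at h
    linarith
  have zc2 : C 1 1 = 0 := by
    have h := congr_fun (congr_fun hC 1) 1
    simp only [Matrix.transpose_apply, Matrix.neg_apply] at h
    linarith
  have zc3 : C 2 2 = 0 := by
    have h := congr_fun (congr_fun hC 2) 2
    simp only [Matrix.transpose_apply, Matrix.neg_apply] at h
    linarith
  have zc4 : C 0 1 = -C 1 0 := by
    have h := congr_fun (congr_fun hC 1) 0
    simp only [Matrix.transpose_apply, Matrix.neg_apply] at h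
    linarith
  have zc5 : C 2 0 = -C 0 2 := by
    have h := congr_fun (congr_fun hC 0) 2
    simp only [Matrix.transpose_apply, Matrix.neg_apply] at h
    linarith
  have zc6 : C 1 2 = -C 2 1 := by
    have h := congr_fun (congr_fun hC 2) 1
    simp only [Matrix.transpose_apply, Matrix.neg_apply] at h
    linarith
  rw [za1, za2, za3, za4, za5, za6, zc1, zc2, zc3, zc4, zc5, zc6] at hsq ⊢
  have E00 : B 0 0 * B 0 0 + B 0 1 * B 0 1 + B 0 2 * B 0 2 = (1 : ℝ) - (A 0 2)^2 - (A 1 0)^2 := by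
    have h := congr_fun (congr_fun hsq 0) 0
    simp [Matrix.mul_apply, Fin.sum_univ_six, cons_val_five'] at h
    first | linear_combination h | linear_combination -h
  have E01 : B 0 0 * B 1 0 + B 0 1 * B 1 1 + B 0 2 * B 1 2 = (A 2 1) * (A 0 2) := by
    have h := congr_fun (congr_fun hsq 0) 1
    simp [Matrix.mul_apply, Fin.sum_univ_six, cons_val_five'] at h
    first | linear_combination h | linear_combination -h
  have E02 : B 0 0 * B 2 0 + B 0 1 * B 2 1 + B 0 2 * B 2 2 = (A 2 1) * (A 1 0) := by
    have h := congr_fun (congr_fun hsq 0) 2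
    simp [Matrix.mul_apply, Fin.sum_univ_six, cons_val_five'] at h
    first | linear_combination h | linear_combination -h
  have E11 : B 1 0 * B 1 0 + B 1 1 * B 1 1 + B 1 2 * B 1 2 = (1 : ℝ) - (A 2 1)^2 - (A 1 0)^2 := by
    have h := congr_fun (congr_fun hsq 1) 1
    simp [Matrix.mul_apply, Fin.sum_univ_six, cons_val_five'] at h
    first | linear_combination h | linear_combination -h
  have E12 : B 1 0 * B 2 0 + B 1 1 * B 2 1 + B 1 2 * B 2 2 = (A 0 2) * (A 1 0) := by
    have h := congr_fun (congr_fun hsq 1) 2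
    simp [Matrix.mul_apply, Fin.sum_univ_six, cons_val_five'] at h
    first | linear_combination h | linear_combination -h
  have E22 : B 2 0 * B 2 0 + B 2 1 * B 2 1 + B 2 2 * B 2 2 = (1 : ℝ) - (A 2 1)^2 - (A 0 2)^2 := by
    have h := congr_fun (congr_fun hsq 2) 2
    simp [Matrix.mul_apply, Fin.sum_univ_six, cons_val_five'] at h
    first | linear_combination h | linear_combination -h
  have F00 : B 0 0 * B 0 0 + B 1 0 * B 1 0 + B 2 0 * B 2 0 = (1 : ℝ) - (C 0 2)^2 - (C 1 0)^2 := by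
    have h := congr_fun (congr_fun hsq 3) 3
    simp [Matrix.mul_apply, Fin.sum_univ_six, cons_val_five'] at h
    first | linear_combination h | linear_combination -h
  have F01 : B 0 0 * B 0 1 + B 1 0 * B 1 1 + B 2 0 * B 2 1 = (C 2 1) * (C 0 2) := by
    have h := congr_fun (congr_fun hsq 3) 4
    simp [Matrix.mul_apply, Fin.sum_univ_six, cons_val_five'] at h
    first | linear_combination h | linear_combination -h
  have F02 : B 0 0 * B 0 2 + B 1 0 * B 1 2 + B 2 0 * B 2 2 = (C 2 1) * (C 1 0) := by
    have h := congr_fun (congr_fun hsq 3) 5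
    simp [Matrix.mul_apply, Fin.sum_univ_six, cons_val_five'] at h
    first | linear_combination h | linear_combination -h
  have F11 : B 0 1 * B 0 1 + B 1 1 * B 1 1 + B 2 1 * B 2 1 = (1 : ℝ) - (C 2 1)^2 - (C 1 0)^2 := by
    have h := congr_fun (congr_fun hsq 4) 4
    simp [Matrix.mul_apply, Fin.sum_univ_six, cons_val_five'] at h
    first | linear_combination h | linear_combination -h
  have F12 : B 0 1 * B 0 2 + B 1 1 * B 1 2 + B 2 1 * B 2 2 = (C 0 2) * (C 1 0) := by
    have h := congr_fun (congr_fun hsq 4) 5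
    simp [Matrix.mul_apply, Fin.sum_univ_six, cons_val_five'] at h
    first | linear_combination h | linear_combination -h
  have F22 : B 0 2 * B 0 2 + B 1 2 * B 1 2 + B 2 2 * B 2 2 = (1 : ℝ) - (C 2 1)^2 - (C 0 2)^2 := by
    have h := congr_fun (congr_fun hsq 5) 5
    simp [Matrix.mul_apply, Fin.sum_univ_six, cons_val_five'] at h
    first | linear_combination h | linear_combination -h
  have hBBm : B * Bᵀ = (!![(1 : ℝ) - (A 0 2)^2 - (A 1 0)^2, (A 2 1) * (A 0 2), (A 2 1) * (A 1 0); (A 2 1) * (A 0 2), (1 : ℝ) - (A 2 1)^2 - (A 1 0)^2, (A 0 2) * (A 1 0); (A 2 1) * (A 1 0), (A 0 2) * (A 1 0), (1 : ℝ) - (A 2 1)^2 - (A 0 2)^2] : Matrix (Fin 3) (Fin 3) ℝ) := by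
    ext i j
    fin_cases i <;> fin_cases j <;>
      simp [Matrix.mul_apply, Fin.sum_univ_three, Matrix.transpose_apply]
    · linear_combination E00
    · linear_combination E01
    · linear_combination E02
    · linear_combination E01
    · linear_combination E11
    · linear_combination E12
    · linear_combination E02
    · linear_combination E12
    · linear_combination E22
  have hBtBm : Bᵀ * B = (!![(1 : ℝ) - (C 0 2)^2 - (C 1 0)^2, (C 2 1) * (C 0 2), (C 2 1) * (C 1 0); (C 2 1) * (C 0 2), (1 : ℝ) - (C 2 1)^2 - (C 1 0)^2, (C 0 2) * (C 1 0); (C 2 1) * (C 1 0), (C 0 2) * (C 1 0), (1 : ℝ) - (C 2 1)^2 - (C 0 2)^2] : Matrix (Fin 3) (Fin 3) ℝ) := by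
    ext i j
    fin_cases i <;> fin_cases j <;>
      simp [Matrix.mul_apply, Fin.sum_univ_three, Matrix.transpose_apply]
    · linear_combination F00
    · linear_combination F01
    · linear_combination F02
    · linear_combination F01
    · linear_combination F11
    · linear_combination F12
    · linear_combination F02
    · linear_combination F12
    · linear_combination F22
  have hd1 : (!![(1 : ℝ) - (A 0 2)^2 - (A 1 0)^2, (A 2 1) * (A 0 2), (A 2 1) * (A 1 0); (A 2 1) * (A 0 2), (1 : ℝ) - (A 2 1)^2 - (A 1 0)^2, (A 0 2) * (A 1 0); (A 2 1) * (A 1 0), (A 0 2) * (A 1 0), (1 : ℝ) - (A 2 1)^2 - (A 0 2)^2] : Matrix (Fin 3) (Fin 3) ℝ).det = 0 := by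
    rw [← hBBm, Matrix.det_mul, hdet, zero_mul]
  have hd2 : (!![(1 : ℝ) - (C 0 2)^2 - (C 1 0)^2, (C 2 1) * (C 0 2), (C 2 1) * (C 1 0); (C 2 1) * (C 0 2), (1 : ℝ) - (C 2 1)^2 - (C 1 0)^2, (C 0 2) * (C 1 0); (C 2 1) * (C 1 0), (C 0 2) * (C 1 0), (1 : ℝ) - (C 2 1)^2 - (C 0 2)^2] : Matrix (Fin 3) (Fin 3) ℝ).det = 0 := by
    rw [← hBtBm, Matrix.det_mul, Matrix.det_transpose, hdet, zero_mul]
  have hα : (A 2 1)^2 + (A 0 2)^2 + (A 1 0)^2 = 1 := by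
    have h2 : (-(1 : ℝ) + (A 2 1)^2 + (A 0 2)^2 + (A 1 0)^2)^2 = 0 := by
      simp [Matrix.det_fin_three] at hd1
      linear_combination hd1
    have h3 := sq_eq_zero_iff.mp h2
    linarith
  have hγ : (C 2 1)^2 + (C 0 2)^2 + (C 1 0)^2 = 1 := by
    have h2 : (-(1 : ℝ) + (C 2 1)^2 + (C 0 2)^2 + (C 1 0)^2)^2 = 0 := by
      simp [Matrix.det_fin_three] at hd2
      linear_combination hd2
    have h3 := sq_eq_zero_iff.mp h2
    linarith
  have S01 : ((B 0 0) * (A 0 2) - (B 1 0) * (A 2 1))^2 + ((B 0 1) * (A 0 2) - (B 1 1) * (A 2 1))^2 + ((B 0 2) * (A 0 2) - (B 1 2) * (A 2 1))^2 = 0 := by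
    linear_combination ((A 0 2)^2) * E00 - ((2 : ℝ) * (A 2 1) * (A 0 2)) * E01 + ((A 2 1)^2) * E11 - ((A 2 1)^2 + (A 0 2)^2) * hα
  have R010 : (B 0 0) * (A 0 2) - (B 1 0) * (A 2 1) = 0 := by
    have h2 : ((B 0 0) * (A 0 2) - (B 1 0) * (A 2 1))^2 = 0 := by
      linarith [S01, sq_nonneg ((B 0 1) * (A 0 2) - (B 1 1) * (A 2 1)), sq_nonneg ((B 0 2) * (A 0 2) - (B 1 2) * (A 2 1)), sq_nonneg ((B 0 0) * (A 0 2) - (B 1 0) * (A 2 1))]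
    have h3 := sq_eq_zero_iff.mp h2
    linarith
  have R011 : (B 0 1) * (A 0 2) - (B 1 1) * (A 2 1) = 0 := by
    have h2 : ((B 0 1) * (A 0 2) - (B 1 1) * (A 2 1))^2 = 0 := by
      linarith [S01, sq_nonneg ((B 0 0) * (A 0 2) - (B 1 0) * (A 2 1)), sq_nonneg ((B 0 2) * (A 0 2) - (B 1 2) * (A 2 1)), sq_nonneg ((B 0 1) * (A 0 2) - (B 1 1) * (A 2 1))]
    have h3 := sq_eq_zero_iff.mp h2
    linarith
  have R012 : (B 0 2) * (A 0 2) - (B 1 2) * (A 2 1) = 0 := by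
    have h2 : ((B 0 2) * (A 0 2) - (B 1 2) * (A 2 1))^2 = 0 := by
      linarith [S01, sq_nonneg ((B 0 0) * (A 0 2) - (B 1 0) * (A 2 1)), sq_nonneg ((B 0 1) * (A 0 2) - (B 1 1) * (A 2 1)), sq_nonneg ((B 0 2) * (A 0 2) - (B 1 2) * (A 2 1))]
    have h3 := sq_eq_zero_iff.mp h2
    linarith
  have S02 : ((B 0 0) * (A 1 0) - (B 2 0) * (A 2 1))^2 + ((B 0 1) * (A 1 0) - (B 2 1) * (A 2 1))^2 + ((B 0 2) * (A 1 0) - (B 2 2) * (A 2 1))^2 = 0 := by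
    linear_combination ((A 1 0)^2) * E00 - ((2 : ℝ) * (A 2 1) * (A 1 0)) * E02 + ((A 2 1)^2) * E22 - ((A 2 1)^2 + (A 1 0)^2) * hα
  have R020 : (B 0 0) * (A 1 0) - (B 2 0) * (A 2 1) = 0 := by
    have h2 : ((B 0 0) * (A 1 0) - (B 2 0) * (A 2 1))^2 = 0 := by
      linarith [S02, sq_nonneg ((B 0 1) * (A 1 0) - (B 2 1) * (A 2 1)), sq_nonneg ((B 0 2) * (A 1 0) - (B 2 2) * (A 2 1)), sq_nonneg ((B 0 0) * (A 1 0) - (B 2 0) * (A 2 1))]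
    have h3 := sq_eq_zero_iff.mp h2
    linarith
  have R021 : (B 0 1) * (A 1 0) - (B 2 1) * (A 2 1) = 0 := by
    have h2 : ((B 0 1) * (A 1 0) - (B 2 1) * (A 2 1))^2 = 0 := by
      linarith [S02, sq_nonneg ((B 0 0) * (A 1 0) - (B 2 0) * (A 2 1)), sq_nonneg ((B 0 2) * (A 1 0) - (B 2 2) * (A 2 1)), sq_nonneg ((B 0 1) * (A 1 0) - (B 2 1) * (A 2 1))]
    have h3 := sq_eq_zero_iff.mp h2
    linarith
  have R022 : (B 0 2) * (A 1 0) - (B 2 2) * (A 2 1) = 0 := by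
    have h2 : ((B 0 2) * (A 1 0) - (B 2 2) * (A 2 1))^2 = 0 := by
      linarith [S02, sq_nonneg ((B 0 0) * (A 1 0) - (B 2 0) * (A 2 1)), sq_nonneg ((B 0 1) * (A 1 0) - (B 2 1) * (A 2 1)), sq_nonneg ((B 0 2) * (A 1 0) - (B 2 2) * (A 2 1))]
    have h3 := sq_eq_zero_iff.mp h2
    linarith
  have S12 : ((B 1 0) * (A 1 0) - (B 2 0) * (A 0 2))^2 + ((B 1 1) * (A 1 0) - (B 2 1) * (A 0 2))^2 + ((B 1 2) * (A 1 0) - (B 2 2) * (A 0 2))^2 = 0 := by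
    linear_combination ((A 1 0)^2) * E11 - ((2 : ℝ) * (A 0 2) * (A 1 0)) * E12 + ((A 0 2)^2) * E22 - ((A 0 2)^2 + (A 1 0)^2) * hα
  have R120 : (B 1 0) * (A 1 0) - (B 2 0) * (A 0 2) = 0 := by
    have h2 : ((B 1 0) * (A 1 0) - (B 2 0) * (A 0 2))^2 = 0 := by
      linarith [S12, sq_nonneg ((B 1 1) * (A 1 0) - (B 2 1) * (A 0 2)), sq_nonneg ((B 1 2) * (A 1 0) - (B 2 2) * (A 0 2)), sq_nonneg ((B 1 0) * (A 1 0) - (B 2 0) * (A 0 2))]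
    have h3 := sq_eq_zero_iff.mp h2
    linarith
  have R121 : (B 1 1) * (A 1 0) - (B 2 1) * (A 0 2) = 0 := by
    have h2 : ((B 1 1) * (A 1 0) - (B 2 1) * (A 0 2))^2 = 0 := by
      linarith [S12, sq_nonneg ((B 1 0) * (A 1 0) - (B 2 0) * (A 0 2)), sq_nonneg ((B 1 2) * (A 1 0) - (B 2 2) * (A 0 2)), sq_nonneg ((B 1 1) * (A 1 0) - (B 2 1) * (A 0 2))]
    have h3 := sq_eq_zero_iff.mp h2
    linarith
  have R122 : (B 1 2) * (A 1 0) - (B 2 2) * (A 0 2) = 0 := by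
    have h2 : ((B 1 2) * (A 1 0) - (B 2 2) * (A 0 2))^2 = 0 := by
      linarith [S12, sq_nonneg ((B 1 0) * (A 1 0) - (B 2 0) * (A 0 2)), sq_nonneg ((B 1 1) * (A 1 0) - (B 2 1) * (A 0 2)), sq_nonneg ((B 1 2) * (A 1 0) - (B 2 2) * (A 0 2))]
    have h3 := sq_eq_zero_iff.mp h2
    linarith
  clear hsq hskew hIe hdet hd1 hd2 hBBm hBtBm hA hC
  set s0 : ℝ := (A 2 1) * B 0 0 + (A 0 2) * B 1 0 + (A 1 0) * B 2 0 with hs0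
  set s1 : ℝ := (A 2 1) * B 0 1 + (A 0 2) * B 1 1 + (A 1 0) * B 2 1 with hs1
  set s2 : ℝ := (A 2 1) * B 0 2 + (A 0 2) * B 1 2 + (A 1 0) * B 2 2 with hs2
  set t : ℝ := s0 * (C 2 1) + s1 * (C 0 2) + s2 * (C 1 0) with ht0
  have P400 : B 0 0 = s0 * (A 2 1) := by
    linear_combination (-(B 0 0)) * hα + (-((A 2 1))) * hs0 + ((A 0 2)) * R010 + ((A 1 0)) * R020
  have P401 : B 0 1 = s1 * (A 2 1) := by
    linear_combination (-(B 0 1)) * hα + (-((A 2 1))) * hs1 + ((A 0 2)) * R011 + ((A 1 0)) * R021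
  have P402 : B 0 2 = s2 * (A 2 1) := by
    linear_combination (-(B 0 2)) * hα + (-((A 2 1))) * hs2 + ((A 0 2)) * R012 + ((A 1 0)) * R022
  have P410 : B 1 0 = s0 * (A 0 2) := by
    linear_combination (-(B 1 0)) * hα + (-((A 0 2))) * hs0 + (-((A 2 1))) * R010 + ((A 1 0)) * R120
  have P411 : B 1 1 = s1 * (A 0 2) := by
    linear_combination (-(B 1 1)) * hα + (-((A 0 2))) * hs1 + (-((A 2 1))) * R011 + ((A 1 0)) * R121
  have P412 : B 1 2 = s2 * (A 0 2) := by
    linear_combination (-(B 1 2)) * hα + (-((A 0 2))) * hs2 + (-((A 2 1))) * R012 + ((A 1 0)) * R122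
  have P420 : B 2 0 = s0 * (A 1 0) := by
    linear_combination (-(B 2 0)) * hα + (-((A 1 0))) * hs0 + (-((A 2 1))) * R020 + (-((A 0 2))) * R120
  have P421 : B 2 1 = s1 * (A 1 0) := by
    linear_combination (-(B 2 1)) * hα + (-((A 1 0))) * hs1 + (-((A 2 1))) * R021 + (-((A 0 2))) * R121
  have P422 : B 2 2 = s2 * (A 1 0) := by
    linear_combination (-(B 2 2)) * hα + (-((A 1 0))) * hs2 + (-((A 2 1))) * R022 + (-((A 0 2))) * R122
  have P500 : s0^2 = (C 2 1)^2 := by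
    linear_combination (-(s0^2)) * hα + F00 + (-1 : ℝ) * hγ + (-(B 0 0)) * P400 + (-(s0 * (A 2 1))) * P400 + (-(B 1 0)) * P410 + (-(s0 * (A 0 2))) * P410 + (-(B 2 0)) * P420 + (-(s0 * (A 1 0))) * P420
  have P501 : s0 * s1 = (C 2 1) * (C 0 2) := by
    linear_combination (-(s0 * s1)) * hα + F01 + (-(B 0 1)) * P400 + (-(s0 * (A 2 1))) * P401 + (-(B 1 1)) * P410 + (-(s0 * (A 0 2))) * P411 + (-(B 2 1)) * P420 + (-(s0 * (A 1 0))) * P421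
  have P502 : s0 * s2 = (C 2 1) * (C 1 0) := by
    linear_combination (-(s0 * s2)) * hα + F02 + (-(B 0 2)) * P400 + (-(s0 * (A 2 1))) * P402 + (-(B 1 2)) * P410 + (-(s0 * (A 0 2))) * P412 + (-(B 2 2)) * P420 + (-(s0 * (A 1 0))) * P422
  have P511 : s1^2 = (C 0 2)^2 := by
    linear_combination (-(s1^2)) * hα + F11 + (-1 : ℝ) * hγ + (-(B 0 1)) * P401 + (-(s1 * (A 2 1))) * P401 + (-(B 1 1)) * P411 + (-(s1 * (A 0 2))) * P411 + (-(B 2 1)) * P421 + (-(s1 * (A 1 0))) * P421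
  have P512 : s1 * s2 = (C 0 2) * (C 1 0) := by
    linear_combination (-(s1 * s2)) * hα + F12 + (-(B 0 2)) * P401 + (-(s1 * (A 2 1))) * P402 + (-(B 1 2)) * P411 + (-(s1 * (A 0 2))) * P412 + (-(B 2 2)) * P421 + (-(s1 * (A 1 0))) * P422
  have P522 : s2^2 = (C 1 0)^2 := by
    linear_combination (-(s2^2)) * hα + F22 + (-1 : ℝ) * hγ + (-(B 0 2)) * P402 + (-(s2 * (A 2 1))) * P402 + (-(B 1 2)) * P412 + (-(s2 * (A 0 2))) * P412 + (-(B 2 2)) * P422 + (-(s2 * (A 1 0))) * P422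
  have hT : t^2 = 1 := by
    linear_combination (s0 * (C 2 1) + s1 * (C 0 2) + s2 * (C 1 0) + t) * ht0 + ((1 : ℝ) + (C 2 1)^2 + (C 0 2)^2 + (C 1 0)^2) * hγ + ((C 2 1)^2) * P500 + ((C 2 1) * (C 0 2)) * P501 + ((C 2 1) * (C 1 0)) * P502 + ((C 2 1) * (C 0 2)) * P501 + ((C 0 2)^2) * P511 + ((C 0 2) * (C 1 0)) * P512 + ((C 2 1) * (C 1 0)) * P502 + ((C 0 2) * (C 1 0)) * P512 + ((C 1 0)^2) * P522
  have P70 : s0 = t * (C 2 1) := by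
    linear_combination (-(s0)) * hT + (s0 * t) * ht0 + (t * (C 2 1)) * hγ + (t * (C 2 1)) * P500 + (t * (C 0 2)) * P501 + (t * (C 1 0)) * P502
  have P71 : s1 = t * (C 0 2) := by
    linear_combination (-(s1)) * hT + (s1 * t) * ht0 + (t * (C 0 2)) * hγ + (t * (C 2 1)) * P501 + (t * (C 0 2)) * P511 + (t * (C 1 0)) * P512
  have P72 : s2 = t * (C 1 0) := by
    linear_combination (-(s2)) * hT + (s2 * t) * ht0 + (t * (C 1 0)) * hγ + (t * (C 2 1)) * P502 + (t * (C 0 2)) * P512 + (t * (C 1 0)) * P522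
  have P800 : B 0 0 = t * (A 2 1) * (C 2 1) := by
    linear_combination P400 + ((A 2 1)) * P70
  have P801 : B 0 1 = t * (A 2 1) * (C 0 2) := by
    linear_combination P401 + ((A 2 1)) * P71
  have P802 : B 0 2 = t * (A 2 1) * (C 1 0) := by
    linear_combination P402 + ((A 2 1)) * P72
  have P810 : B 1 0 = t * (A 0 2) * (C 2 1) := by
    linear_combination P410 + ((A 0 2)) * P70
  have P811 : B 1 1 = t * (A 0 2) * (C 0 2) := by
    linear_combination P411 + ((A 0 2)) * P71
  have P812 : B 1 2 = t * (A 0 2) * (C 1 0) := by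
    linear_combination P412 + ((A 0 2)) * P72
  have P820 : B 2 0 = t * (A 1 0) * (C 2 1) := by
    linear_combination P420 + ((A 1 0)) * P70
  have P821 : B 2 1 = t * (A 1 0) * (C 0 2) := by
    linear_combination P421 + ((A 1 0)) * P71
  have P822 : B 2 2 = t * (A 1 0) * (C 1 0) := by
    linear_combination P422 + ((A 1 0)) * P72
  rw [P800, P801, P802, P810, P811, P812, P820, P821, P822]
  exact fun X Y => nijKey (A 2 1) (A 0 2) (A 1 0) (C 2 1) (C 0 2) (C 1 0) t hα hγ X Y
end

section
/- Let V = ℂ⁴ with basis v⁰, v¹, v², v³ and consider the elements of Λ²V: E¹ = v⁰∧v¹ + v²∧v³, E² = −i(v⁰∧v¹ − v²∧v³), E³ = v⁰∧v² + v³∧v¹, E⁴ = −i(v⁰∧v² − v³∧v¹), E⁵ = v⁰∧v³ + v¹∧v², E⁶ = −i(v⁰∧v³ − v¹∧v²). Then the ℂ-linear span of {E¹ − iE⁴, E² − iE⁵, E³ − iE⁶} equals V_u = { u ∧ w : w ∈ ℂ⁴ } for u = v⁰ + v¹ − v² + v³. Consequently the maximally non-integrable structure I_N corresponds to the point [1,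 1, −1, 1] ∈ ℂP³. -/
/-- The standard basis `v⁰, v¹, v², v³` of `V = ℂ⁴`. -/
noncomputable def v (j : Fin 4) : Fin 4 → ℂ := Pi.single j 1

/-- The wedge product `a ∧ b` of two vectors, viewed in the exterior algebra of `ℂ⁴`
(its degree-2 part is `Λ²V`). -/
noncomputable def w (a b : Fin 4 → ℂ) : ExteriorAlgebra ℂ (Fin 4 → ℂ) :=
  ExteriorAlgebra.ι ℂ a * ExteriorAlgebra.ι ℂ b

/-- `E¹ = v⁰∧v¹ + v²∧v³`. -/
noncomputable def E1 : ExteriorAlgebra ℂ (Fin 4 → ℂ) := w (v 0) (v 1) + w (v 2) (v 3)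
/-- `E² = −i(v⁰∧v¹ − v²∧v³)`. -/
noncomputable def E2 : ExteriorAlgebra ℂ (Fin 4 → ℂ) :=
  (-Complex.I) • (w (v 0) (v 1) - w (v 2) (v 3))
/-- `E³ = v⁰∧v² + v³∧v¹`. -/
noncomputable def E3 : ExteriorAlgebra ℂ (Fin 4 → ℂ) := w (v 0) (v 2) + w (v 3) (v 1)
/-- `E⁴ = −i(v⁰∧v² − v³∧v¹)`. -/
noncomputable def E4 : ExteriorAlgebra ℂ (Fin 4 → ℂ) :=
  (-Complex.I) • (w (v 0) (v 2) - w (v 3) (v 1))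
/-- `E⁵ = v⁰∧v³ + v¹∧v²`. -/
noncomputable def E5 : ExteriorAlgebra ℂ (Fin 4 → ℂ) := w (v 0) (v 3) + w (v 1) (v 2)
/-- `E⁶ = −i(v⁰∧v³ − v¹∧v²)`. -/
noncomputable def E6 : ExteriorAlgebra ℂ (Fin 4 → ℂ) :=
  (-Complex.I) • (w (v 0) (v 3) - w (v 1) (v 2))


lemma w_add_left (a b c : Fin 4 → ℂ) : w (a + b) c = w a c + w b c := by
  simp [w, map_add, add_mul]
lemma w_sub_left (a b c : Fin 4 → ℂ) : w (a - b) c = w a c - w b c := by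
  simp [w, map_sub, sub_mul]
lemma w_add_right (a b c : Fin 4 → ℂ) : w a (b + c) = w a b + w a c := by
  simp [w, map_add, mul_add]
lemma w_smul_right (a : Fin 4 → ℂ) (t : ℂ) (b : Fin 4 → ℂ) : w a (t • b) = t • w a b := by
  simp [w, map_smul, mul_smul_comm]
lemma w_self (a : Fin 4 → ℂ) : w a a = 0 := ExteriorAlgebra.ι_sq_zero a
lemma w_swap (a b : Fin 4 → ℂ) : w b a = -(w a b) := by
  have h := w_self (a + b)
  rw [w_add_left, w_add_right, w_add_right, w_self, w_self] at h
  linear_combination (norm := abel) h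

lemma s21 : w (v 2) (v 1) = -(w (v 1) (v 2)) := w_swap _ _
lemma s31 : w (v 3) (v 1) = -(w (v 1) (v 3)) := w_swap _ _
lemma s32 : w (v 3) (v 2) = -(w (v 2) (v 3)) := w_swap _ _

lemma hF1 : E1 - Complex.I • E4 = w (v 0 + v 1 - v 2 + v 3) (v 1) - w (v 0 + v 1 - v 2 + v 3) (v 2) := by
  simp only [E1, E4, smul_smul, mul_neg, Complex.I_mul_I, neg_neg, one_smul,
    w_add_left, w_sub_left, w_self, s21, s31, s32]
  abel

lemma hF2 : E2 - Complex.I • E5 =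
    (-Complex.I) • (w (v 0 + v 1 - v 2 + v 3) (v 1) + w (v 0 + v 1 - v 2 + v 3) (v 3)) := by
  simp only [E2, E5, w_add_left, w_sub_left, w_self, s21, s31, s32]
  module

lemma hF3 : E3 - Complex.I • E6 = w (v 0 + v 1 - v 2 + v 3) (v 2) - w (v 0 + v 1 - v 2 + v 3) (v 3) := by
  simp only [E3, E6, smul_smul, mul_neg, Complex.I_mul_I, neg_neg, one_smul,
    w_add_left, w_sub_left, w_self, s21, s31, s32]
  abel

lemma hu0 : w (v 0 + v 1 - v 2 + v 3) (v 0) =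
    -(w (v 0 + v 1 - v 2 + v 3) (v 1)) + w (v 0 + v 1 - v 2 + v 3) (v 2)
      - w (v 0 + v 1 - v 2 + v 3) (v 3) := by
  have h := w_self (v 0 + v 1 - v 2 + v 3)
  rw [show w (v 0 + v 1 - v 2 + v 3) (v 0 + v 1 - v 2 + v 3)
      = w (v 0 + v 1 - v 2 + v 3) (v 0) + w (v 0 + v 1 - v 2 + v 3) (v 1)
        - w (v 0 + v 1 - v 2 + v 3) (v 2) + w (v 0 + v 1 - v 2 + v 3) (v 3) from ?_] at h
  · linear_combination (norm := abel) h
  · rw [show (v 0 + v 1 - v 2 + v 3 : Fin 4 → ℂ) = v 0 + v 1 + (-1 : ℂ) • v 2 + v 3 by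
      funext i; simp; ring]
    rw [w_add_right, w_add_right, w_add_right, w_smul_right]
    module

lemma w_sum_right (a : Fin 4 → ℂ) (f : Fin 4 → (Fin 4 → ℂ)) :
    w a (∑ j, f j) = ∑ j, w a (f j) := by
  simp [w, map_sum, Finset.mul_sum]


/-- the span of `{E¹ − iE⁴, E² − iE⁵, E³ − iE⁶}` (the i-eigenspace of the
maximally non-integrable structure `I_N`) equals `V_u = {u ∧ w : w ∈ ℂ⁴}` for
`u = v⁰ + v¹ − v² + v³`; hence `I_N` corresponds to the point `[1, 1, −1, 1] ∈ ℂP³`. -/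
theorem stmt15 :
    Submodule.span ℂ {E1 - Complex.I • E4, E2 - Complex.I • E5, E3 - Complex.I • E6} =
      Submodule.span ℂ (Set.range fun u : Fin 4 → ℂ => w (v 0 + v 1 - v 2 + v 3) u) := by
  set u : Fin 4 → ℂ := v 0 + v 1 - v 2 + v 3 with hu
  apply le_antisymm
  · rw [Submodule.span_le]
    rintro x hx
    simp only [Set.mem_insert_iff, Set.mem_singleton_iff] at hx
    rcases hx with rfl | rfl | rfl
    · rw [hF1]
      exact Submodule.sub_mem _ (Submodule.subset_span ⟨v 1, rfl⟩)
        (Submodule.subset_span ⟨v 2, rfl⟩)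
    · rw [hF2]
      exact Submodule.smul_mem _ _ (Submodule.add_mem _ (Submodule.subset_span ⟨v 1, rfl⟩)
        (Submodule.subset_span ⟨v 3, rfl⟩))
    · rw [hF3]
      exact Submodule.sub_mem _ (Submodule.subset_span ⟨v 2, rfl⟩)
        (Submodule.subset_span ⟨v 3, rfl⟩)
  · rw [Submodule.span_le]
    rintro _ ⟨x, rfl⟩
    set S := Submodule.span ℂ
      {E1 - Complex.I • E4, E2 - Complex.I • E5, E3 - Complex.I • E6} with hS
    have m1 : E1 - Complex.I • E4 ∈ S := Submodule.subset_span (by left; rfl)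
    have m2 : E2 - Complex.I • E5 ∈ S := Submodule.subset_span (by right; left; rfl)
    have m3 : E3 - Complex.I • E6 ∈ S := Submodule.subset_span (by right; right; rfl)
    have e1 : w u (v 1) = (2⁻¹ : ℂ) • ((E1 - Complex.I • E4) + (E3 - Complex.I • E6))
        + (2⁻¹ * Complex.I) • (E2 - Complex.I • E5) := by
      rw [hF1, hF2, hF3, smul_smul]
      rw [show (2⁻¹ * Complex.I) * (-Complex.I) = (2⁻¹ : ℂ) by
        rw [mul_neg, mul_assoc, Complex.I_mul_I]; ring]
      module
    have h1 : w u (v 1) ∈ S := by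
      rw [e1]
      exact Submodule.add_mem _ (Submodule.smul_mem _ _ (Submodule.add_mem _ m1 m3))
        (Submodule.smul_mem _ _ m2)
    have h2 : w u (v 2) ∈ S := by
      have : w u (v 2) = w u (v 1) - (E1 - Complex.I • E4) := by rw [hF1]; abel
      rw [this]; exact Submodule.sub_mem _ h1 m1
    have h3 : w u (v 3) ∈ S := by
      have : w u (v 3) = w u (v 2) - (E3 - Complex.I • E6) := by rw [hF3]; abel
      rw [this]; exact Submodule.sub_mem _ h2 m3
    have h0 : w u (v 0) ∈ S := by
      rw [hu0]
      exact Submodule.sub_mem _ (Submodule.add_mem _ (Submodule.neg_mem _ h1) h2) h3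
    have hx : x = ∑ j : Fin 4, x j • v j := by
      funext i
      simp [v, Finset.sum_apply, Pi.single_apply]
    have : w u x = ∑ j : Fin 4, x j • w u (v j) := by
      conv_lhs => rw [hx]
      rw [w_sum_right]
      congr 1; funext j; rw [w_smul_right]
    show w u x ∈ S
    rw [this]
    refine Submodule.sum_mem _ fun j _ => Submodule.smul_mem _ _ ?_
    fin_cases j <;> assumption
end
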